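/- Let W : ℝ → ℝ satisfy W(x) * exp(W(x)) = x for all x ∈ (-1/e, e), with W real-valued and W(x) > -1. Define R(θ) = 1 - x*exp(-cos θ)*cos(θ + sin θ) and I(θ) = x*exp(-cos θ)*sin(θ + sin θ). Then for all x ∈ (-1/e, e), W(x) = (1/(2π)) * ∫ from 0 to π of log(R(θ)^2 + I(θ)^2) dθ. -/

import Mathlib

/-!
Put `h(z) = z - x e^{-z}`. On the unit circle, `|h(e^{iθ})| = |1 - x e^{-e^{iθ} - iθ}|`, whose
square is `R(θ)² + I(θ)²`. For `-1/e < x < e` the only zero of `h` in the closed unit disc is the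
real number `w = W(x) ∈ (-1, 1)`, and it is simple (`h'(w) = 1 + w`), so `h(z) = (z - w) G(z)` with
`G` entire and zero-free on the disc. The circle average of `log |z - w|` vanishes since `|w| < 1`,
and that of the harmonic function `log |G|` is `log |G(0)| = log |x / w| = w`. Finally
`|h(e^{i(2π - θ)})| = |h(e^{iθ})|` because `h` commutes with conjugation, which halves the range
of integration.
-/

open Real
open scoped Complex ComplexConjugate
open Metric Set MeasureTheory

lemma strictMonoOn_mul_exp : StrictMonoOn (fun t : ℝ => t * rexp t) (Ici (-1)) := by
  refine strictMonoOn_of_deriv_pos (convex_Ici _) (by fun_prop) fun t ht => ?_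
  rw [interior_Ici, mem_Ioi] at ht
  have hd : HasDerivAt (fun t : ℝ => t * rexp t) ((1 + t) * rexp t) t := by
    simpa [add_mul] using (hasDerivAt_id' t).fun_mul (Real.hasDerivAt_exp t)
  rw [hd.deriv]
  exact mul_pos (by linarith) (exp_pos t)

lemma sin_sq_lt_mul_sin {b : ℝ} (hb0 : b ≠ 0) (hb : |b| < π) : sin b ^ 2 < b * sin b := by
  wlog hpos : 0 < b generalizing b
  · have := this (neg_ne_zero.mpr hb0) (by rwa [abs_neg])
      (by linarith [hb0.lt_or_gt.resolve_right hpos])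
    simpa [Real.sin_neg] using this
  have hsin : 0 < sin b := sin_pos_of_pos_of_lt_pi hpos (lt_of_abs_lt hb)
  nlinarith [sin_lt hpos]

/- For `z = a + ib` the equation gives `x sin b = -e^a b`; if `b ≠ 0`, then `|sin b| < |b|` and
`a ≥ -1` force `x < -e⁻¹`. -/
lemma im_eq_zero_of_mul_cexp_eq {x : ℝ} (hx : -rexp (-1) < x) {z : ℂ} (hz : ‖z‖ ≤ 1)
    (hzx : z * cexp z = x) : z.im = 0 := by
  set a := z.re
  set b := z.im
  have hre : a * (rexp a * cos b) - b * (rexp a * sin b) = x := by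
    simpa [Complex.mul_re, Complex.exp_re, Complex.exp_im] using congrArg Complex.re hzx
  have him : a * (rexp a * sin b) + b * (rexp a * cos b) = 0 := by
    simpa [Complex.mul_im, Complex.exp_re, Complex.exp_im] using congrArg Complex.im hzx
  have hsin : x * sin b = -(rexp a * b) := by
    linear_combination (-sin b) * hre + cos b * him - (rexp a * b) * sin_sq_add_cos_sq b
  by_contra hb0
  have hb : |b| ≤ 1 := (Complex.abs_im_le_norm z).trans hz
  have hea : rexp (-1) ≤ rexp a :=
    exp_le_exp.mpr (neg_le_of_abs_le ((Complex.abs_re_le_norm z).trans hz))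
  have hlt : sin b ^ 2 < b * sin b :=
    sin_sq_lt_mul_sin hb0 (hb.trans_lt (by linarith [pi_gt_three]))
  have hsq : 0 < sin b ^ 2 := by
    have : sin b ≠ 0 := fun h => by simp [h] at hlt
    positivity
  have : x * sin b ^ 2 < -rexp (-1) * sin b ^ 2 := calc
    x * sin b ^ 2 = -(rexp a * (b * sin b)) := by linear_combination sin b * hsin
    _ ≤ -(rexp (-1) * (b * sin b)) := by gcongr; linarith
    _ < -rexp (-1) * sin b ^ 2 := by nlinarith [exp_pos (-1)]
  nlinarith

lemma eq_of_mul_cexp_eq {x w : ℝ} (hx : -rexp (-1) < x) (hw : w * rexp w = x) (hw1 : -1 ≤ w)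
    {z : ℂ} (hz : ‖z‖ ≤ 1) (hzx : z * cexp z = x) : z = w := by
  have hz_re : z = z.re := Complex.ext rfl (by simpa using im_eq_zero_of_mul_cexp_eq hx hz hzx)
  have hre : z.re * rexp z.re = x := by
    rw [hz_re] at hzx
    exact_mod_cast hzx
  have hre1 : -1 ≤ z.re := neg_le_of_abs_le ((Complex.abs_re_le_norm z).trans hz)
  rw [hz_re, strictMonoOn_mul_exp.injOn hre1 hw1 (hre.trans hw.symm)]

noncomputable def lambertDefect (x : ℝ) (z : ℂ) : ℂ := z - x * cexp (-z)

lemma lambertDefect_eq_zero_iff {x : ℝ} {z : ℂ} : lambertDefect x z = 0 ↔ z * cexp z = x := by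
  rw [lambertDefect, sub_eq_zero, Complex.exp_neg, ← div_eq_mul_inv,
    eq_div_iff (Complex.exp_ne_zero z)]

lemma lambertDefect_conj (x : ℝ) (z : ℂ) :
    lambertDefect x (conj z) = conj (lambertDefect x z) := by
  simp [lambertDefect, ← Complex.exp_conj]

lemma hasDerivAt_lambertDefect (x : ℝ) (z : ℂ) :
    HasDerivAt (lambertDefect x) (1 + x * cexp (-z)) z :=
  ((hasDerivAt_id' z).fun_sub ((hasDerivAt_neg' z).cexp.const_mul (x : ℂ))).congr_deriv
    (by ring)

lemma differentiable_lambertDefect (x : ℝ) : Differentiable ℂ (lambertDefect x) :=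
  fun z => (hasDerivAt_lambertDefect x z).differentiableAt

lemma analyticOnNhd_dslope_lambertDefect (x : ℝ) (c : ℂ) :
    AnalyticOnNhd ℂ (dslope (lambertDefect x) c) univ :=
  ((Complex.differentiableOn_dslope Filter.univ_mem).mpr
    (differentiable_lambertDefect x).differentiableOn).analyticOnNhd isOpen_univ

lemma lambertDefect_eq_sub_mul_dslope {x w : ℝ} (hw : w * rexp w = x) (z : ℂ) :
    lambertDefect x z = (z - w) * dslope (lambertDefect x) w z := by
  have hw0 : lambertDefect x w = 0 := lambertDefect_eq_zero_iff.mpr (by exact_mod_cast hw)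
  rw [← smul_eq_mul, sub_smul_dslope, hw0, sub_zero]

lemma dslope_lambertDefect_zero {x w : ℝ} (hw : w * rexp w = x) :
    dslope (lambertDefect x) w 0 = cexp w := by
  subst hw
  rcases eq_or_ne w 0 with rfl | hw0
  · simp [dslope_same, (hasDerivAt_lambertDefect _ 0).deriv]
  · have h := lambertDefect_eq_sub_mul_dslope (w := w) rfl 0
    rw [lambertDefect] at h
    push_cast at h
    simp only [neg_zero, Complex.exp_zero, mul_one, zero_sub, neg_mul] at h
    exact (mul_left_cancel₀ (by exact_mod_cast hw0) (neg_injective h)).symm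

lemma dslope_lambertDefect_ne_zero {x w : ℝ} (hx : -rexp (-1) < x) (hw : w * rexp w = x)
    (hw1 : -1 < w) {z : ℂ} (hz : z ∈ closedBall 0 1) : dslope (lambertDefect x) w z ≠ 0 := by
  intro hG
  rcases eq_or_ne z w with rfl | hzw
  · rw [dslope_same, (hasDerivAt_lambertDefect x w).deriv, ← hw] at hG
    push_cast at hG
    rw [mul_assoc, ← Complex.exp_add, add_neg_cancel, Complex.exp_zero, mul_one] at hG
    have := congrArg Complex.re hG
    simp at this
    linarith
  · have hzero : lambertDefect x z = 0 := by
      rw [lambertDefect_eq_sub_mul_dslope hw, hG, mul_zero]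
    exact hzw (eq_of_mul_cexp_eq hx hw hw1.le (by simpa using hz)
      (lambertDefect_eq_zero_iff.mp hzero))

lemma circleAverage_log_norm_lambertDefect {x w : ℝ} (hx : -rexp (-1) < x)
    (hw : w * rexp w = x) (hw1 : -1 < w) (hw2 : w < 1) :
    circleAverage (fun z => log ‖lambertDefect x z‖) 0 1 = w := by
  set G := dslope (lambertDefect x) w
  have hwn : ‖(w : ℂ)‖ < 1 := by simpa [abs_lt] using ⟨hw1, hw2⟩
  have hG : AnalyticOnNhd ℂ G (closedBall 0 |1|) :=
    (analyticOnNhd_dslope_lambertDefect x w).mono (subset_univ _)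
  have hG0 : ∀ z ∈ closedBall (0 : ℂ) |1|, G z ≠ 0 := fun z hz =>
    dslope_lambertDefect_ne_zero hx hw hw1 (by simpa using hz)
  calc circleAverage (fun z => log ‖lambertDefect x z‖) 0 1
      = circleAverage (fun z => log ‖z - w‖ + log ‖G z‖) 0 1 := by
        refine circleAverage_congr_sphere fun z hz => ?_
        have hzw : z - w ≠ 0 := sub_ne_zero.mpr fun h => by simp_all
        rw [lambertDefect_eq_sub_mul_dslope hw, norm_mul, log_mul (norm_ne_zero_iff.mpr hzw)
          (norm_ne_zero_iff.mpr (hG0 z (sphere_subset_closedBall hz)))]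
    _ = w := by
        rw [circleAverage_fun_add (circleIntegrable_log_norm_sub_const 1)
            (hG.mono sphere_subset_closedBall).meromorphicOn.circleIntegrable_log_norm,
          circleAverage_log_norm_sub_const₀ hwn, hG.circleAverage_log_norm_of_ne_zero hG0,
          show G 0 = cexp w from dslope_lambertDefect_zero hw, Complex.norm_exp,
          Complex.ofReal_re, log_exp, zero_add]

lemma sq_norm_lambertDefect_circleMap (x θ : ℝ) :
    ‖lambertDefect x (circleMap 0 1 θ)‖ ^ 2 =
      (1 - x * rexp (-cos θ) * cos (θ + sin θ)) ^ 2 +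
        (x * rexp (-cos θ) * sin (θ + sin θ)) ^ 2 := by
  set z := circleMap 0 1 θ
  have hz : z = cexp (θ * Complex.I) := by simp [z, circleMap_zero]
  have hrot : lambertDefect x z * cexp (-(θ * Complex.I)) =
      1 - x * cexp (-(z + θ * Complex.I)) := by
    have hunit : z * cexp (-(θ * Complex.I)) = 1 := by
      rw [hz, ← Complex.exp_add, add_neg_cancel, Complex.exp_zero]
    rw [lambertDefect, sub_mul, hunit, mul_assoc, ← Complex.exp_add, neg_add]
  have hnorm : ‖lambertDefect x z‖ = ‖1 - x * cexp (-(z + θ * Complex.I))‖ := by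
    rw [← hrot, norm_mul, Complex.norm_exp]
    simp
  rw [hnorm, Complex.sq_norm, Complex.normSq_apply]
  simp [Complex.exp_re, Complex.exp_im, hz]
  rw [← neg_add, cos_neg, sin_neg]
  ring

lemma norm_lambertDefect_circleMap_two_pi_sub (x θ : ℝ) :
    ‖lambertDefect x (circleMap 0 1 (2 * π - θ))‖ = ‖lambertDefect x (circleMap 0 1 θ)‖ := by
  rw [show 2 * π - θ = -θ + 2 * π by ring, periodic_circleMap, ← conj_circleMap_zero,
    lambertDefect_conj, Complex.norm_conj]

lemma integral_zero_two_mul_eq_two_mul_integral_of_symm {f : ℝ → ℝ} {a : ℝ}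
    (hf : IntervalIntegrable f volume 0 (2 * a)) (hsymm : ∀ θ, f (2 * a - θ) = f θ) :
    ∫ θ in 0..2 * a, f θ = 2 * ∫ θ in 0..a, f θ := by
  have hmem : a ∈ uIcc 0 (2 * a) := by
    rw [mem_uIcc]
    rcases le_total 0 a with h | h
    exacts [Or.inl ⟨h, by linarith⟩, Or.inr ⟨by linarith, h⟩]
  have hsecond : ∫ θ in a..2 * a, f θ = ∫ θ in 0..a, f θ := by
    have h := intervalIntegral.integral_comp_sub_left f (2 * a) (a := 0) (b := a)
    simp only [hsymm, sub_zero, show 2 * a - a = a by ring] at h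
    exact h.symm
  rw [← intervalIntegral.integral_add_adjacent_intervals
    (hf.mono_set (uIcc_subset_uIcc left_mem_uIcc hmem))
    (hf.mono_set (uIcc_subset_uIcc hmem right_mem_uIcc)), hsecond, two_mul]

/-- Burniston–Siewert-type closed-form representation of the principal branch of
Lambert W on `(-1/e, e)`. -/
theorem lambertW_burniston_siewert_log (W : ℝ → ℝ)
    (hW : ∀ x ∈ Set.Ioo (-1 / Real.exp 1) (Real.exp 1), W x * Real.exp (W x) = x)
    (hWgt : ∀ x ∈ Set.Ioo (-1 / Real.exp 1) (Real.exp 1), W x > -1) :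
    ∀ x ∈ Set.Ioo (-1 / Real.exp 1) (Real.exp 1),
      W x = (1 / (2 * π)) * ∫ θ in (0:ℝ)..π,
        Real.log ((1 - x * Real.exp (-Real.cos θ) * Real.cos (θ + Real.sin θ)) ^ 2 +
          (x * Real.exp (-Real.cos θ) * Real.sin (θ + Real.sin θ)) ^ 2) := by
  intro x hx
  have hw := hW x hx
  have hw1 := hWgt x hx
  have hx1 : -rexp (-1) < x := by simpa [exp_neg, neg_div] using hx.1
  have hw2 : W x < 1 :=
    (strictMonoOn_mul_exp.lt_iff_lt hw1.le (by norm_num : (1 : ℝ) ∈ Ici (-1))).mp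
      (by simpa [hw] using hx.2)
  have hlog : ∀ θ : ℝ, log ((1 - x * rexp (-cos θ) * cos (θ + sin θ)) ^ 2 +
      (x * rexp (-cos θ) * sin (θ + sin θ)) ^ 2) =
        2 * log ‖lambertDefect x (circleMap 0 1 θ)‖ := fun θ => by
    rw [← sq_norm_lambertDefect_circleMap, log_pow, Nat.cast_ofNat]
  have hfull : ∫ θ in 0..2 * π, log ‖lambertDefect x (circleMap 0 1 θ)‖ = 2 * π * W x := by
    have h := circleAverage_log_norm_lambertDefect hx1 hw hw1 hw2
    rw [circleAverage_def, smul_eq_mul] at h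
    field_simp at h
    linarith
  have hint : CircleIntegrable (fun z => log ‖lambertDefect x z‖) 0 1 :=
    MeromorphicOn.circleIntegrable_log_norm
      fun z _ => ((differentiable_lambertDefect x).analyticAt z).meromorphicAt
  have hhalf := integral_zero_two_mul_eq_two_mul_integral_of_symm hint
    fun θ => congrArg log (norm_lambertDefect_circleMap_two_pi_sub x θ)
  rw [hfull] at hhalf
  simp only [hlog, intervalIntegral.integral_const_mul]
  field_simp
  linarith
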